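/- Let K be a nonarchimedean field and A a Banach algebra over K. If A has no non-zero topological divisors of zero, then A is Jacobson-semisimple, i.e. the Jacobson radical of A is the zero ideal. Moreover, if for every spectrally reduced prime ideal p of A the quotient Banach algebra A/p (with the quotient norm) has no non-zero topological divisors of zero, then every spectrally reduced prime ideal of A is an intersection of closed maximal ideals. -/

import Mathlib

open Filter Topology

/-- A bounded power-multiplicative (nonarchimedean, submultiplicative) ring seminorm
on a seminormed commutative ring. -/
structure IsBddPowMulSeminorm {A : Type*} [SeminormedCommRing A] (φ : A → ℝ) : Prop where
  nonneg : ∀ f, 0 ≤ φ f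
  map_zero : φ 0 = 0
  map_one : φ 1 = 1
  map_neg : ∀ f, φ (-f) = φ f
  nonarch : ∀ f g, φ (f + g) ≤ max (φ f) (φ g)
  submul : ∀ f g, φ (f * g) ≤ φ f * φ g
  pow_mul : ∀ f, ∀ n : ℕ, 1 ≤ n → φ (f ^ n) = φ f ^ n
  bounded : ∃ C > 0, ∀ f, φ f ≤ C * ‖f‖

/-- An ideal is spectrally reduced if it is the kernel of some bounded
power-multiplicative seminorm. -/
def IsSpectrallyReduced {A : Type*} [SeminormedCommRing A] (I : Ideal A) : Prop :=
  ∃ φ : A → ℝ, IsBddPowMulSeminorm φ ∧ ∀ f, f ∈ I ↔ φ f = 0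

/-- An element `x` is a topological divisor of zero if there is a sequence whose norms are
bounded away from `0` and whose products with `x` tend to `0`. -/
def IsTopDivZero {A : Type*} [SeminormedRing A] (x : A) : Prop :=
  ∃ u : ℕ → A, (∃ δ > 0, ∀ n, δ ≤ ‖u n‖) ∧ Tendsto (fun n => u n * x) atTop (nhds 0)

/-- The quotient seminorm on `A ⧸ I`: `‖y‖ = inf { ‖g‖ : g ∈ A, g + I = y }`. -/
noncomputable def quotSeminorm {A : Type*} [SeminormedCommRing A] (I : Ideal A)
    (y : A ⧸ I) : ℝ :=
  sInf {r : ℝ | ∃ g : A, Ideal.Quotient.mk I g = y ∧ r = ‖g‖}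

/-- A topological divisor of zero in the quotient `A ⧸ I` with its quotient seminorm. -/
def IsQuotTopDivZero {A : Type*} [SeminormedCommRing A] (I : Ideal A) (x : A ⧸ I) : Prop :=
  ∃ u : ℕ → A ⧸ I, (∃ δ > 0, ∀ n, δ ≤ quotSeminorm I (u n)) ∧
    Tendsto (fun n => quotSeminorm I (u n * x)) atTop (nhds 0)

/-!
An element `x` of the Jacobson radical is not a unit, yet it is the limit of the units
`c ^ n + x` for a scalar `0 < ‖c‖ < 1`. In a Banach algebra such a limit is a topological divisor
of zero: the inverses of the approximating units must blow up (a unit's ball of invertibility has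
radius `‖u⁻¹‖⁻¹`), and rescaled by scalars to norm about `1` they annihilate `x` asymptotically.

A spectrally reduced ideal `p` is the kernel of a continuous seminorm, hence closed, so `A ⧸ p`
is again a Banach algebra, normed by `quotSeminorm`. The first part then gives
`jacobson p = p`, and maximal ideals of a Banach algebra are automatically closed.
-/

theorem Units.norm_inv_inv_le_norm_sub {B : Type*} [NormedRing B] [CompleteSpace B] (u : Bˣ)
    {x : B} (hx : ¬IsUnit x) : ‖(↑u⁻¹ : B)‖⁻¹ ≤ ‖x - u‖ :=
  not_lt.mp fun h => hx (u.ofNearby x h).isUnit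

theorem isTopDivZero_of_tendsto_of_isUnit (𝕜 : Type*) {B : Type*} [NontriviallyNormedField 𝕜]
    [NormedRing B] [NormedAlgebra 𝕜 B] [CompleteSpace B] {a : ℕ → B} {x : B}
    (ha : ∀ n, IsUnit (a n)) (hlim : Tendsto a atTop (𝓝 x)) (hx : ¬IsUnit x) : IsTopDivZero x := by
  have : Nontrivial B := nontrivial_of_ne x 1 (by rintro rfl; exact hx isUnit_one)
  choose v hv using ha
  obtain ⟨c, hc⟩ := NormedField.exists_one_lt_norm 𝕜
  have hshell (n : ℕ) := rescale_to_shell hc one_pos (v n)⁻¹.ne_zero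
  choose d _ hd_lt hd_ge _ using hshell
  refine ⟨fun n => d n • (↑(v n)⁻¹ : B), ⟨1 / ‖c‖, by positivity, hd_ge⟩, ?_⟩
  have hbound (n : ℕ) : ‖(d n • (↑(v n)⁻¹ : B)) * x‖ ≤ (‖(1 : B)‖ + 1) * ‖a n - x‖ := by
    have hd : ‖d n‖ ≤ ‖a n - x‖ := by
      have hw : 0 < ‖(↑(v n)⁻¹ : B)‖ := norm_pos_iff.mpr (v n)⁻¹.ne_zero
      have hd_lt' := hd_lt n
      rw [norm_smul, ← lt_div_iff₀ hw, one_div] at hd_lt'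
      rw [norm_sub_rev, ← hv n]
      exact hd_lt'.le.trans ((v n).norm_inv_inv_le_norm_sub hx)
    have hsplit : (d n • (↑(v n)⁻¹ : B)) * x
        = d n • (1 : B) + (d n • (↑(v n)⁻¹ : B)) * (x - a n) := by
      simp only [← hv n, mul_sub, smul_mul_assoc, Units.inv_mul, add_sub_cancel]
    calc ‖(d n • (↑(v n)⁻¹ : B)) * x‖
        ≤ ‖d n‖ * ‖(1 : B)‖ + ‖d n • (↑(v n)⁻¹ : B)‖ * ‖x - a n‖ :=
          hsplit ▸ norm_add_le_of_le (norm_smul_le _ _) (norm_mul_le _ _)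
      _ ≤ ‖a n - x‖ * ‖(1 : B)‖ + 1 * ‖a n - x‖ := by
          rw [norm_sub_rev x]
          gcongr
          exact (hd_lt n).le
      _ = (‖(1 : B)‖ + 1) * ‖a n - x‖ := by ring
  rw [tendsto_zero_iff_norm_tendsto_zero]
  refine squeeze_zero (fun n => norm_nonneg _) hbound ?_
  simpa using (tendsto_iff_norm_sub_tendsto_zero.mp hlim).const_mul (‖(1 : B)‖ + 1)

theorem isUnit_algebraMap_add_of_mem_jacobson_bot {𝕜 B : Type*} [Field 𝕜] [CommRing B]
    [Algebra 𝕜 B] {x : B} (hx : x ∈ Ideal.jacobson (⊥ : Ideal B)) {s : 𝕜} (hs : s ≠ 0) :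
    IsUnit (algebraMap 𝕜 B s + x) := by
  have hunit : IsUnit (x * algebraMap 𝕜 B s⁻¹ + 1) := Ideal.mem_jacobson_bot.mp hx _
  have hfactor : algebraMap 𝕜 B s * (x * algebraMap 𝕜 B s⁻¹ + 1) = algebraMap 𝕜 B s + x := by
    rw [mul_add, mul_one, mul_left_comm, ← map_mul, mul_inv_cancel₀ hs, map_one, mul_one,
      add_comm]
  exact hfactor ▸ ((isUnit_iff_ne_zero.mpr hs).map (algebraMap 𝕜 B)).mul hunit

theorem not_isUnit_of_mem_jacobson_bot {B : Type*} [CommRing B] [Nontrivial B] {x : B}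
    (hx : x ∈ Ideal.jacobson (⊥ : Ideal B)) : ¬IsUnit x := fun hu =>
  bot_ne_top (Ideal.jacobson_eq_top_iff.mp (Ideal.eq_top_of_isUnit_mem _ hx hu))

theorem jacobson_bot_eq_bot_of_forall_isTopDivZero (𝕜 : Type*) {B : Type*}
    [NontriviallyNormedField 𝕜] [NormedCommRing B] [NormedAlgebra 𝕜 B] [CompleteSpace B]
    (h : ∀ x : B, IsTopDivZero x → x = 0) : Ideal.jacobson (⊥ : Ideal B) = ⊥ := by
  refine eq_bot_iff.mpr fun x hx => Ideal.mem_bot.mpr ?_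
  nontriviality B
  obtain ⟨c, hc0, hc1⟩ := NormedField.exists_norm_lt_one 𝕜
  have hunit (n : ℕ) : IsUnit (algebraMap 𝕜 B (c ^ n) + x) :=
    isUnit_algebraMap_add_of_mem_jacobson_bot hx (pow_ne_zero n (norm_pos_iff.mp hc0))
  have hlim : Tendsto (fun n => algebraMap 𝕜 B (c ^ n) + x) atTop (𝓝 x) := by
    simpa using ((continuous_algebraMap 𝕜 B).tendsto 0).comp
      (tendsto_pow_atTop_nhds_zero_of_norm_lt_one hc1) |>.add_const x
  exact h x (isTopDivZero_of_tendsto_of_isUnit 𝕜 hunit hlim (not_isUnit_of_mem_jacobson_bot hx))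

theorem IsBddPowMulSeminorm.continuous {A : Type*} [SeminormedCommRing A] {φ : A → ℝ}
    (hφ : IsBddPowMulSeminorm φ) : Continuous φ := by
  obtain ⟨C, hC, hbdd⟩ := hφ.bounded
  have hsub (f g : A) : φ f - φ g ≤ C * ‖f - g‖ := by
    have hle := sub_add_cancel f g ▸ hφ.nonarch (f - g) g
    have := hbdd (f - g)
    cases max_cases (φ (f - g)) (φ g) <;> nlinarith [hφ.nonneg g, norm_nonneg (f - g)]
  refine (LipschitzWith.of_dist_le_mul (K := ⟨C, hC.le⟩) fun f g => ?_).continuous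
  rw [Real.dist_eq, dist_eq_norm, abs_sub_le_iff]
  exact ⟨hsub f g, norm_sub_rev g f ▸ hsub g f⟩

theorem IsSpectrallyReduced.isClosed {A : Type*} [SeminormedCommRing A] {I : Ideal A}
    (hI : IsSpectrallyReduced I) : IsClosed (I : Set A) := by
  obtain ⟨φ, hφ, hker⟩ := hI
  have hkerSet : (I : Set A) = φ ⁻¹' {0} := Set.ext hker
  exact hkerSet ▸ isClosed_singleton.preimage hφ.continuous

theorem quotSeminorm_eq_norm {A : Type*} [SeminormedCommRing A] (I : Ideal A) (y : A ⧸ I) :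
    quotSeminorm I y = ‖y‖ := by
  have hbdd : BddBelow {r : ℝ | ∃ g : A, Ideal.Quotient.mk I g = y ∧ r = ‖g‖} :=
    ⟨0, by rintro r ⟨g, _, rfl⟩; exact norm_nonneg g⟩
  refine le_antisymm (le_of_forall_pos_le_add fun ε hε => ?_) ?_
  · obtain ⟨g, hg, hlt⟩ := Ideal.Quotient.norm_mk_lt y hε
    exact (csInf_le hbdd ⟨g, hg, rfl⟩).trans hlt.le
  · obtain ⟨g, hg⟩ := Ideal.Quotient.mk_surjective y
    refine le_csInf ⟨‖g‖, g, hg, rfl⟩ ?_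
    rintro r ⟨g, rfl, rfl⟩
    exact Ideal.Quotient.norm_mk_le I g

theorem IsTopDivZero.isQuotTopDivZero {A : Type*} [SeminormedCommRing A] {I : Ideal A}
    {x : A ⧸ I} (hx : IsTopDivZero x) : IsQuotTopDivZero I x := by
  obtain ⟨u, hu, hlim⟩ := hx
  simp only [IsQuotTopDivZero, quotSeminorm_eq_norm]
  exact ⟨u, hu, tendsto_zero_iff_norm_tendsto_zero.mp hlim⟩

theorem Ideal.jacobson_eq_sInf_isMaximal_isClosed {A : Type*} [NormedCommRing A]
    [CompleteSpace A] (I : Ideal A) :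
    I.jacobson = sInf {m : Ideal A | I ≤ m ∧ m.IsMaximal ∧ IsClosed (m : Set A)} := by
  have hclosed : {m : Ideal A | I ≤ m ∧ m.IsMaximal ∧ IsClosed (m : Set A)}
      = {m : Ideal A | I ≤ m ∧ m.IsMaximal} :=
    Set.ext fun m => ⟨fun ⟨hI, hm, _⟩ => ⟨hI, hm⟩, fun ⟨hI, hm⟩ => ⟨hI, hm, hm.isClosed⟩⟩
  rw [hclosed, Ideal.jacobson]

theorem jacobson_semisimple_of_no_topDivZero {K A : Type*}
    [NontriviallyNormedField K] [NormedCommRing A] [NormedAlgebra K A] [CompleteSpace A] :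
    ((∀ x : A, IsTopDivZero x → x = 0) → Ideal.jacobson (⊥ : Ideal A) = ⊥) ∧
    ((∀ p : Ideal A, p.IsPrime → IsSpectrallyReduced p →
        ∀ x : A ⧸ p, IsQuotTopDivZero p x → x = 0) →
      ∀ p : Ideal A, p.IsPrime → IsSpectrallyReduced p →
        p = sInf {m : Ideal A | p ≤ m ∧ m.IsMaximal ∧ IsClosed (m : Set A)}) := by
  refine ⟨jacobson_bot_eq_bot_of_forall_isTopDivZero K, fun h p hp hsp => ?_⟩
  have : IsClosed (p : Set A) := hsp.isClosed
  have hquot : Ideal.jacobson (⊥ : Ideal (A ⧸ p)) = ⊥ :=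
    jacobson_bot_eq_bot_of_forall_isTopDivZero K fun x hx =>
      h p hp hsp x hx.isQuotTopDivZero
  rw [← Ideal.jacobson_eq_sInf_isMaximal_isClosed,
    Ideal.jacobson_eq_iff_jacobson_quotient_eq_bot.mpr hquot]
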